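/- arXiv:1311.6107 — 3 statements merged into one kernel-verified Lean document; each statement's English description precedes it below -/
import Mathlib

section
/- If V : ℝⁿ → ℝ is differentiable at x with gradient ∇V(x) and V satisfies the HJI equation at x, then for every u ∈ ℝᵐ and every w ∈ ℝ^q one has H_V(x, u_V(x), w) ≤ 0 ≤ H_V(x, u, w_V(x)); that is, under the HJI equation the Hamiltonian evaluated at the control policy u_V is nonpositive for every disturbance, and evaluated at the worst-case disturbance w_V it is nonnegative for every control. -/
/-!
Completing the square separately in `u` (a quadratic form in `R`) and in `w` (the term
`-γ²‖w‖²`) gives the saddle identity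
`H_V(x, u, w) = H_V(x, u_V, w_V) + ⟪u - u_V, R (u - u_V)⟫ - γ² ‖w - w_V‖²`,
and the HJI equation says exactly that `H_V(x, u_V, w_V) = 0`.
-/

open Matrix

/-- Matrix–vector multiplication, valued in Euclidean space. -/
noncomputable def mv {a b : ℕ} (M : Matrix (Fin a) (Fin b) ℝ)
    (v : EuclideanSpace ℝ (Fin b)) : EuclideanSpace ℝ (Fin a) :=
  WithLp.toLp 2 (M.mulVec v)

/-- The control policy `u_V(x) = -(1/2) R⁻¹ g(x)ᵀ ∇V(x)`. -/
noncomputable def uPol {n m : ℕ}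
    (g : EuclideanSpace ℝ (Fin n) → Matrix (Fin n) (Fin m) ℝ)
    (R : Matrix (Fin m) (Fin m) ℝ)
    (V : EuclideanSpace ℝ (Fin n) → ℝ)
    (x : EuclideanSpace ℝ (Fin n)) : EuclideanSpace ℝ (Fin m) :=
  (-(1/2 : ℝ)) • mv R⁻¹ (mv (g x)ᵀ (gradient V x))

/-- The disturbance policy `w_V(x) = (1/(2γ²)) k(x)ᵀ ∇V(x)`. -/
noncomputable def wPol {n q : ℕ}
    (k : EuclideanSpace ℝ (Fin n) → Matrix (Fin n) (Fin q) ℝ)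
    (γ : ℝ)
    (V : EuclideanSpace ℝ (Fin n) → ℝ)
    (x : EuclideanSpace ℝ (Fin n)) : EuclideanSpace ℝ (Fin q) :=
  (1/(2*γ^2)) • mv (k x)ᵀ (gradient V x)

/-- The Hamiltonian `H_V(x,u,w)`. -/
noncomputable def Ham {n m q p : ℕ}
    (f : EuclideanSpace ℝ (Fin n) → EuclideanSpace ℝ (Fin n))
    (g : EuclideanSpace ℝ (Fin n) → Matrix (Fin n) (Fin m) ℝ)
    (k : EuclideanSpace ℝ (Fin n) → Matrix (Fin n) (Fin q) ℝ)
    (h : EuclideanSpace ℝ (Fin n) → EuclideanSpace ℝ (Fin p))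
    (R : Matrix (Fin m) (Fin m) ℝ) (γ : ℝ)
    (V : EuclideanSpace ℝ (Fin n) → ℝ)
    (x : EuclideanSpace ℝ (Fin n))
    (u : EuclideanSpace ℝ (Fin m)) (w : EuclideanSpace ℝ (Fin q)) : ℝ :=
  (inner ℝ (gradient V x) (f x + mv (g x) u + mv (k x) w) : ℝ)
    + ‖h x‖^2 + (inner ℝ u (mv R u) : ℝ) - γ^2 * ‖w‖^2

/-- `V` satisfies the HJI equation at `x`. -/
def HJIAt {n m q p : ℕ}
    (f : EuclideanSpace ℝ (Fin n) → EuclideanSpace ℝ (Fin n))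
    (g : EuclideanSpace ℝ (Fin n) → Matrix (Fin n) (Fin m) ℝ)
    (k : EuclideanSpace ℝ (Fin n) → Matrix (Fin n) (Fin q) ℝ)
    (h : EuclideanSpace ℝ (Fin n) → EuclideanSpace ℝ (Fin p))
    (R : Matrix (Fin m) (Fin m) ℝ) (γ : ℝ)
    (V : EuclideanSpace ℝ (Fin n) → ℝ)
    (x : EuclideanSpace ℝ (Fin n)) : Prop :=
  (inner ℝ (gradient V x) (f x) : ℝ) + ‖h x‖^2
    - (1/4) * (inner ℝ (mv (g x)ᵀ (gradient V x)) (mv R⁻¹ (mv (g x)ᵀ (gradient V x))) : ℝ)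
    + (1/(4*γ^2)) * ‖mv (k x)ᵀ (gradient V x)‖^2 = 0

open scoped InnerProductSpace

/-- `u₀` is the critical point of the quadratic `u ↦ ⟪s, u⟫ + ⟪u, T u⟫`. -/
theorem LinearMap.IsSymmetric.complete_square {E : Type*} [NormedAddCommGroup E]
    [InnerProductSpace ℝ E] {T : E →ₗ[ℝ] E} (hT : T.IsSymmetric) {s u₀ : E}
    (hu₀ : (2 : ℝ) • T u₀ = -s) (u : E) :
    ⟪s, u⟫_ℝ + ⟪u, T u⟫_ℝ = ⟪s, u₀⟫_ℝ + ⟪u₀, T u₀⟫_ℝ + ⟪u - u₀, T (u - u₀)⟫_ℝ := by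
  have hs : s = -(2 : ℝ) • T u₀ := by rw [neg_smul, hu₀, neg_neg]
  have hsymm : ⟪u₀, T u⟫_ℝ = ⟪u, T u₀⟫_ℝ := by rw [← hT, real_inner_comm]
  subst hs
  simp only [map_sub, inner_sub_left, inner_sub_right, real_inner_smul_left, hsymm,
    real_inner_comm (T u₀)]
  ring

lemma mv_eq_toEuclideanLin {a b : ℕ} (M : Matrix (Fin a) (Fin b) ℝ)
    (v : EuclideanSpace ℝ (Fin b)) :
    mv M v = M.toEuclideanLin v := rfl

lemma inner_mv_right {a b : ℕ} (M : Matrix (Fin a) (Fin b) ℝ)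
    (v : EuclideanSpace ℝ (Fin a)) (u : EuclideanSpace ℝ (Fin b)) :
    ⟪v, mv M u⟫_ℝ = ⟪mv Mᵀ v, u⟫_ℝ := by
  rw [mv_eq_toEuclideanLin, mv_eq_toEuclideanLin, ← conjTranspose_eq_transpose_of_trivial,
    toEuclideanLin_conjTranspose_eq_adjoint, LinearMap.adjoint_inner_left]

lemma mv_mul {a b c : ℕ} (A : Matrix (Fin a) (Fin b) ℝ) (B : Matrix (Fin b) (Fin c) ℝ)
    (v : EuclideanSpace ℝ (Fin c)) : mv (A * B) v = mv A (mv B v) := by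
  simp [mv, mulVec_mulVec]

lemma mv_one {a : ℕ} (v : EuclideanSpace ℝ (Fin a)) : mv 1 v = v := by
  simp [mv]

section Hamiltonian

variable {n m q p : ℕ}
  (f : EuclideanSpace ℝ (Fin n) → EuclideanSpace ℝ (Fin n))
  (g : EuclideanSpace ℝ (Fin n) → Matrix (Fin n) (Fin m) ℝ)
  (k : EuclideanSpace ℝ (Fin n) → Matrix (Fin n) (Fin q) ℝ)
  (h : EuclideanSpace ℝ (Fin n) → EuclideanSpace ℝ (Fin p))
  (R : Matrix (Fin m) (Fin m) ℝ) (γ : ℝ)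
  (V : EuclideanSpace ℝ (Fin n) → ℝ) (x : EuclideanSpace ℝ (Fin n))

lemma ham_eq_quadratic_add_quadratic (u : EuclideanSpace ℝ (Fin m))
    (w : EuclideanSpace ℝ (Fin q)) :
    Ham f g k h R γ V x u w = ⟪gradient V x, f x⟫_ℝ + ‖h x‖ ^ 2
      + (⟪mv (g x)ᵀ (gradient V x), u⟫_ℝ + ⟪u, R.toEuclideanLin u⟫_ℝ)
      + (⟪mv (k x)ᵀ (gradient V x), w⟫_ℝ
        + ⟪w, ((-γ ^ 2) • LinearMap.id : EuclideanSpace ℝ (Fin q) →ₗ[ℝ] _) w⟫_ℝ) := by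
  rw [Ham, inner_add_right, inner_add_right, inner_mv_right, inner_mv_right,
    mv_eq_toEuclideanLin R, LinearMap.smul_apply, LinearMap.id_apply, real_inner_smul_right,
    real_inner_self_eq_norm_sq]
  ring

lemma ham_eq_ham_policies_add (hR : R.IsHermitian) (hdet : IsUnit R.det) (hγ : γ ≠ 0)
    (u : EuclideanSpace ℝ (Fin m)) (w : EuclideanSpace ℝ (Fin q)) :
    Ham f g k h R γ V x u w = Ham f g k h R γ V x (uPol g R V x) (wPol k γ V x)
      + ⟪u - uPol g R V x, mv R (u - uPol g R V x)⟫_ℝ - γ ^ 2 * ‖w - wPol k γ V x‖ ^ 2 := by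
  have hu : (2 : ℝ) • R.toEuclideanLin (uPol g R V x) = -mv (g x)ᵀ (gradient V x) := by
    rw [uPol, map_smul, ← mv_eq_toEuclideanLin, ← mv_mul, mul_nonsing_inv R hdet, mv_one,
      smul_smul]
    norm_num
  have hw : (2 : ℝ) • ((-γ ^ 2) • LinearMap.id : EuclideanSpace ℝ (Fin q) →ₗ[ℝ] _) (wPol k γ V x)
      = -mv (k x)ᵀ (gradient V x) := by
    rw [wPol, LinearMap.smul_apply, LinearMap.id_apply, smul_smul, smul_smul,
      show 2 * -γ ^ 2 * (1 / (2 * γ ^ 2)) = -1 by field_simp, neg_one_smul]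
  rw [ham_eq_quadratic_add_quadratic, ham_eq_quadratic_add_quadratic,
    (isSymmetric_toEuclideanLin_iff.mpr hR).complete_square hu u,
    (LinearMap.IsSymmetric.id.smul (star_trivial _)).complete_square hw w]
  simp only [LinearMap.smul_apply, LinearMap.id_apply, real_inner_smul_right,
    real_inner_self_eq_norm_sq, mv_eq_toEuclideanLin R]
  ring

lemma hjiAt_iff_ham_policies_eq_zero (hdet : IsUnit R.det) (hγ : γ ≠ 0) :
    HJIAt f g k h R γ V x ↔ Ham f g k h R γ V x (uPol g R V x) (wPol k γ V x) = 0 := by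
  have hRr : R.toEuclideanLin (mv R⁻¹ (mv (g x)ᵀ (gradient V x)))
      = mv (g x)ᵀ (gradient V x) := by
    rw [← mv_eq_toEuclideanLin, ← mv_mul, mul_nonsing_inv R hdet, mv_one]
  rw [HJIAt, ham_eq_quadratic_add_quadratic, uPol, wPol]
  congr! 1
  simp only [map_smul, LinearMap.smul_apply, LinearMap.id_apply, hRr, real_inner_smul_left,
    real_inner_smul_right, real_inner_self_eq_norm_sq, real_inner_comm (mv (g x)ᵀ (gradient V x))]
  field_simp
  ring

end Hamiltonian

theorem ham_sign_under_hji_general {n m q p : ℕ}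
    (f : EuclideanSpace ℝ (Fin n) → EuclideanSpace ℝ (Fin n))
    (g : EuclideanSpace ℝ (Fin n) → Matrix (Fin n) (Fin m) ℝ)
    (k : EuclideanSpace ℝ (Fin n) → Matrix (Fin n) (Fin q) ℝ)
    (h : EuclideanSpace ℝ (Fin n) → EuclideanSpace ℝ (Fin p))
    (R : Matrix (Fin m) (Fin m) ℝ) (hR : R.PosDef)
    (γ : ℝ) (hγ : 0 < γ)
    (V : EuclideanSpace ℝ (Fin n) → ℝ)
    (x : EuclideanSpace ℝ (Fin n))
    (hHJI : HJIAt f g k h R γ V x) :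
    ∀ (u : EuclideanSpace ℝ (Fin m)) (w : EuclideanSpace ℝ (Fin q)),
      Ham f g k h R γ V x (uPol g R V x) w ≤ 0
        ∧ 0 ≤ Ham f g k h R γ V x u (wPol k γ V x) := by
  intro u w
  have hdet : IsUnit R.det := hR.det_pos.ne'.isUnit
  have hsaddle := ham_eq_ham_policies_add f g k h R γ V x hR.isHermitian hdet hγ.ne'
  have hvalue : Ham f g k h R γ V x (uPol g R V x) (wPol k γ V x) = 0 :=
    (hjiAt_iff_ham_policies_eq_zero f g k h R γ V x hdet hγ.ne').mp hHJI
  have hmin : Ham f g k h R γ V x (uPol g R V x) w = -(γ ^ 2 * ‖w - wPol k γ V x‖ ^ 2) := by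
    simpa [hvalue] using hsaddle (uPol g R V x) w
  have hmax : Ham f g k h R γ V x u (wPol k γ V x)
      = ⟪u - uPol g R V x, mv R (u - uPol g R V x)⟫_ℝ := by
    simpa [hvalue] using hsaddle u (wPol k γ V x)
  rw [hmin, hmax]
  exact ⟨neg_nonpos.mpr (by positivity),
    (isPositive_toEuclideanLin_iff.mpr hR.posSemidef).inner_nonneg_right _⟩

/-- **Sign of the Hamiltonian under the HJI equation.**  If `V` is differentiable at `x` and
satisfies the HJI equation at `x`, then for all `u, w`,
`H_V(x, u_V(x), w) ≤ 0 ≤ H_V(x, u, w_V(x))`. -/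
theorem ham_sign_under_hji {n m q p : ℕ}
    (f : EuclideanSpace ℝ (Fin n) → EuclideanSpace ℝ (Fin n))
    (g : EuclideanSpace ℝ (Fin n) → Matrix (Fin n) (Fin m) ℝ)
    (k : EuclideanSpace ℝ (Fin n) → Matrix (Fin n) (Fin q) ℝ)
    (h : EuclideanSpace ℝ (Fin n) → EuclideanSpace ℝ (Fin p))
    (R : Matrix (Fin m) (Fin m) ℝ) (hR : R.PosDef)
    (γ : ℝ) (hγ : 0 < γ)
    (V : EuclideanSpace ℝ (Fin n) → ℝ)
    (x : EuclideanSpace ℝ (Fin n))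
    (hV : DifferentiableAt ℝ V x)
    (hHJI : HJIAt f g k h R γ V x) :
    ∀ (u : EuclideanSpace ℝ (Fin m)) (w : EuclideanSpace ℝ (Fin q)),
      Ham f g k h R γ V x (uPol g R V x) w ≤ 0
        ∧ 0 ≤ Ham f g k h R γ V x u (wPol k γ V x) :=
  ham_sign_under_hji_general f g k h R hR γ hγ V x hHJI
end

section
/- Lyapunov property of the HJI solution for the undisturbed closed loop (stability part of Lemma 1): let X ⊆ ℝⁿ, let V : ℝⁿ → ℝ be differentiable and satisfy the HJI equation at every point of X, let I be an interval, and let x : ℝ → ℝⁿ be differentiable on I with x(t) ∈ X and x'(t) = f(x(t)) + g(x(t))·u_V(x(t)) for all t ∈ I (i.e., the closed-loop dynamics with disturbance w ≡ 0). Then for every t ∈ I the derivative of τ ↦ V(x(τ)) at t equals −‖h(x(t))‖² − ⟨u_V(x(t)), R·u_V(x(t))⟩ − γ²·‖w_V(x(t))‖² ≤ 0; in particular t ↦ V(x(t)) is antitone (nonincreasing) on I. -/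
open Matrix

/-! Along a closed-loop trajectory, `d/dt V(x t) = ⟨∇V, f + g u_V⟩`. Writing `a = gᵀ∇V`, one has
`⟨∇V, g u_V⟩ = -½⟨a, R⁻¹a⟩` and `⟨u_V, R u_V⟩ = ¼⟨a, R⁻¹a⟩`, and `γ²‖w_V‖² = ‖kᵀ∇V‖²/(4γ²)`, so
the HJI equation turns `⟨∇V, f + g u_V⟩` into `-‖h‖² - ⟨u_V, R u_V⟩ - γ²‖w_V‖²`, which is
nonpositive because `R` is positive semidefinite. -/

lemma inner_eq_dotProduct {a : ℕ} (v w : EuclideanSpace ℝ (Fin a)) :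
    (inner ℝ v w : ℝ) = v.ofLp ⬝ᵥ w.ofLp := by
  simp [PiLp.inner_apply, dotProduct, mul_comm]

lemma inner_mv_eq_inner_mv_transpose {a b : ℕ} (M : Matrix (Fin a) (Fin b) ℝ)
    (v : EuclideanSpace ℝ (Fin a)) (w : EuclideanSpace ℝ (Fin b)) :
    (inner ℝ v (mv M w) : ℝ) = (inner ℝ (mv Mᵀ v) w : ℝ) := by
  rw [inner_eq_dotProduct, inner_eq_dotProduct]
  simp only [mv, WithLp.ofLp_toLp, dotProduct_mulVec, mulVec_transpose]

lemma mv_smul {a b : ℕ} (M : Matrix (Fin a) (Fin b) ℝ) (c : ℝ)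
    (v : EuclideanSpace ℝ (Fin b)) : mv M (c • v) = c • mv M v :=
  congrArg (WithLp.toLp 2) (M.mulVec_smul c v.ofLp)

lemma mv_mv_inv {a : ℕ} {R : Matrix (Fin a) (Fin a) ℝ} (hR : IsUnit R.det)
    (v : EuclideanSpace ℝ (Fin a)) : mv R (mv R⁻¹ v) = v := by
  simp only [mv, WithLp.ofLp_toLp, mulVec_mulVec, mul_nonsing_inv R hR, one_mulVec,
    WithLp.toLp_ofLp]

lemma Matrix.PosSemidef.inner_mv_self_nonneg {a : ℕ} {R : Matrix (Fin a) (Fin a) ℝ}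
    (hR : R.PosSemidef) (v : EuclideanSpace ℝ (Fin a)) : 0 ≤ (inner ℝ v (mv R v) : ℝ) := by
  simpa [inner_eq_dotProduct, mv] using hR.dotProduct_mulVec_nonneg v.ofLp

lemma HasGradientAt.comp_hasDerivAt {n : ℕ} {V : EuclideanSpace ℝ (Fin n) → ℝ}
    {x : ℝ → EuclideanSpace ℝ (Fin n)} {v x' : EuclideanSpace ℝ (Fin n)} {t : ℝ}
    (hV : HasGradientAt V v (x t)) (hx : HasDerivAt x x' t) :
    HasDerivAt (fun τ => V (x τ)) (inner ℝ v x') t :=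
  hV.hasFDerivAt.comp_hasDerivAt t hx

lemma antitoneOn_of_hasDerivAt_nonpos {I : Set ℝ} (hI : I.OrdConnected) {φ φ' : ℝ → ℝ}
    (hφ : ∀ t ∈ I, HasDerivAt φ (φ' t) t) (hφ' : ∀ t ∈ I, φ' t ≤ 0) : AntitoneOn φ I :=
  antitoneOn_of_hasDerivWithinAt_nonpos hI.convex
    (fun t ht => (hφ t ht).continuousAt.continuousWithinAt)
    (fun t ht => (hφ t (interior_subset ht)).hasDerivWithinAt)
    (fun t ht => hφ' t (interior_subset ht))

section Policies

variable {n m q p : ℕ}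
  (f : EuclideanSpace ℝ (Fin n) → EuclideanSpace ℝ (Fin n))
  (g : EuclideanSpace ℝ (Fin n) → Matrix (Fin n) (Fin m) ℝ)
  (k : EuclideanSpace ℝ (Fin n) → Matrix (Fin n) (Fin q) ℝ)
  (h : EuclideanSpace ℝ (Fin n) → EuclideanSpace ℝ (Fin p))
  (R : Matrix (Fin m) (Fin m) ℝ) (γ : ℝ)
  (V : EuclideanSpace ℝ (Fin n) → ℝ) (y : EuclideanSpace ℝ (Fin n))

lemma inner_gradient_mv_uPol :
    (inner ℝ (gradient V y) (mv (g y) (uPol g R V y)) : ℝ)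
      = -(1/2) * inner ℝ (mv (g y)ᵀ (gradient V y)) (mv R⁻¹ (mv (g y)ᵀ (gradient V y))) := by
  rw [inner_mv_eq_inner_mv_transpose, uPol, real_inner_smul_right]

variable {R} in
lemma inner_uPol_mv_uPol (hR : IsUnit R.det) :
    (inner ℝ (uPol g R V y) (mv R (uPol g R V y)) : ℝ)
      = (1/4) * inner ℝ (mv (g y)ᵀ (gradient V y)) (mv R⁻¹ (mv (g y)ᵀ (gradient V y))) := by
  rw [uPol, mv_smul, real_inner_smul_left, real_inner_smul_right, mv_mv_inv hR, real_inner_comm]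
  ring

variable {γ} in
lemma sq_mul_norm_wPol_sq (hγ : γ ≠ 0) :
    γ^2 * ‖wPol k γ V y‖^2 = (1/(4*γ^2)) * ‖mv (k y)ᵀ (gradient V y)‖^2 := by
  rw [wPol, norm_smul, mul_pow, Real.norm_eq_abs, sq_abs]
  field_simp
  ring

variable {f g k h R γ V y} in
lemma HJIAt.inner_gradient_closedLoop (hR : IsUnit R.det) (hγ : γ ≠ 0)
    (hHJI : HJIAt f g k h R γ V y) :
    (inner ℝ (gradient V y) (f y + mv (g y) (uPol g R V y)) : ℝ)
      = -‖h y‖^2 - (inner ℝ (uPol g R V y) (mv R (uPol g R V y)) : ℝ)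
        - γ^2 * ‖wPol k γ V y‖^2 := by
  rw [inner_add_right, inner_gradient_mv_uPol, inner_uPol_mv_uPol g V y hR,
    sq_mul_norm_wPol_sq k V y hγ]
  unfold HJIAt at hHJI
  linarith

end Policies

lemma neg_norm_sq_sub_inner_mv_sub_mul_norm_sq_nonpos {m q p : ℕ}
    {R : Matrix (Fin m) (Fin m) ℝ} (hR : R.PosSemidef) (γ : ℝ) (z : EuclideanSpace ℝ (Fin p))
    (u : EuclideanSpace ℝ (Fin m)) (w : EuclideanSpace ℝ (Fin q)) :
    -‖z‖^2 - (inner ℝ u (mv R u) : ℝ) - γ^2 * ‖w‖^2 ≤ 0 := by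
  have hu := hR.inner_mv_self_nonneg u
  have hw : 0 ≤ γ^2 * ‖w‖^2 := by positivity
  linarith [sq_nonneg ‖z‖]

/-- **Lyapunov property of the HJI solution for the undisturbed closed loop (stability part
of Lemma 1).**  If `V` is differentiable and satisfies the HJI equation on `X`, and `x`
solves `x' = f(x) + g(x) u_V(x)` in `X` on the interval `I`, then `τ ↦ V(x τ)` has
derivative `-‖h(x t)‖² - ⟨u_V(x t), R u_V(x t)⟩ - γ²‖w_V(x t)‖² ≤ 0` at every `t ∈ I`, and
`t ↦ V(x t)` is antitone on `I`. -/
theorem lyapunov_undisturbed {n m q p : ℕ}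
    (f : EuclideanSpace ℝ (Fin n) → EuclideanSpace ℝ (Fin n))
    (g : EuclideanSpace ℝ (Fin n) → Matrix (Fin n) (Fin m) ℝ)
    (k : EuclideanSpace ℝ (Fin n) → Matrix (Fin n) (Fin q) ℝ)
    (h : EuclideanSpace ℝ (Fin n) → EuclideanSpace ℝ (Fin p))
    (R : Matrix (Fin m) (Fin m) ℝ) (hR : R.PosDef)
    (γ : ℝ) (hγ : 0 < γ)
    (X : Set (EuclideanSpace ℝ (Fin n)))
    (V : EuclideanSpace ℝ (Fin n) → ℝ)
    (hV : ∀ y ∈ X, DifferentiableAt ℝ V y)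
    (hHJI : ∀ y ∈ X, HJIAt f g k h R γ V y)
    (I : Set ℝ) (hI : I.OrdConnected)
    (x : ℝ → EuclideanSpace ℝ (Fin n))
    (hxX : ∀ t ∈ I, x t ∈ X)
    (hx : ∀ t ∈ I, HasDerivAt x (f (x t) + mv (g (x t)) (uPol g R V (x t))) t) :
    (∀ t ∈ I,
      HasDerivAt (fun τ => V (x τ))
          (-‖h (x t)‖^2 - (inner ℝ (uPol g R V (x t)) (mv R (uPol g R V (x t))) : ℝ)
            - γ^2 * ‖wPol k γ V (x t)‖^2) t
        ∧ (-‖h (x t)‖^2 - (inner ℝ (uPol g R V (x t)) (mv R (uPol g R V (x t))) : ℝ)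
            - γ^2 * ‖wPol k γ V (x t)‖^2) ≤ 0)
      ∧ AntitoneOn (fun t => V (x t)) I := by
  have hRdet : IsUnit R.det := (isUnit_iff_isUnit_det R).mp hR.isUnit
  have hderiv : ∀ t ∈ I, HasDerivAt (fun τ => V (x τ))
      (-‖h (x t)‖^2 - (inner ℝ (uPol g R V (x t)) (mv R (uPol g R V (x t))) : ℝ)
        - γ^2 * ‖wPol k γ V (x t)‖^2) t := fun t ht => by
    rw [← (hHJI _ (hxX t ht)).inner_gradient_closedLoop hRdet hγ.ne']
    exact (hV _ (hxX t ht)).hasGradientAt.comp_hasDerivAt (hx t ht)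
  have hnonpos := fun t (_ : t ∈ I) =>
    neg_norm_sq_sub_inner_mv_sub_mul_norm_sq_nonpos hR.posSemidef γ (h (x t))
      (uPol g R V (x t)) (wPol k γ V (x t))
  exact ⟨fun t ht => ⟨hderiv t ht, hnonpos t ht⟩,
    antitoneOn_of_hasDerivAt_nonpos hI hderiv hnonpos⟩
end

section
/- (Linear independence claim in the proof of Theorem 2.) Let X ⊆ ℝⁿ, let L be a natural number, let φ₁, …, φ_L : ℝⁿ → ℝ be differentiable, and let F : ℝⁿ → ℝⁿ. Suppose that for every nonzero θ ∈ ℝᴸ there exist an interval I, a differentiable trajectory x : ℝ → ℝⁿ of F remaining in X on I, and times t₁, t₂ ∈ I such that Σ_{l=1}^{L} θ_l · (φ_l(x(t₂)) − φ_l(x(t₁))) ≠ 0. Then the L functions x ↦ ⟨∇φ_l(x), F(x)⟩ (l = 1, …, L) are linearly independent as real-valued functions on X; i.e., if Σ_{l=1}^{L} θ_l · ⟨∇φ_l(x), F(x)⟩ = 0 for all x ∈ X then θ = 0. -/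
/-!
If `∑ l, θ l * ⟪∇φ l, F⟫` vanishes on `X`, then by the chain rule it is the time derivative of
`t ↦ ∑ l, θ l * φ l (x t)` along every trajectory of `F` staying in `X`. On an interval a
function with zero derivative is constant, so this combination takes the same value at any two
times, which is exactly what the hypothesis rules out for `θ ≠ 0`.
-/

open scoped RealInnerProductSpace

theorem Set.OrdConnected.eq_of_hasDerivAt_eq_zero {E : Type*} [NormedAddCommGroup E]
    [NormedSpace ℝ E] {g : ℝ → E} {I : Set ℝ} (hI : I.OrdConnected)
    (hg : ∀ t ∈ I, HasDerivAt g 0 t) {a b : ℝ} (ha : a ∈ I) (hb : b ∈ I) : g a = g b := by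
  have hle : ‖g b - g a‖ ≤ 0 * ‖b - a‖ :=
    hI.convex.norm_image_sub_le_of_norm_hasDerivWithin_le (f' := fun _ => 0)
      (fun t ht => (hg t ht).hasDerivWithinAt) (fun _ _ => norm_zero.le) ha hb
  rw [zero_mul, norm_le_zero_iff, sub_eq_zero] at hle
  exact hle.symm

theorem DifferentiableAt.hasDerivAt_comp_inner_gradient {E : Type*} [NormedAddCommGroup E]
    [InnerProductSpace ℝ E] [CompleteSpace E] {f : E → ℝ} {x : ℝ → E} {v : E} {t : ℝ}
    (hf : DifferentiableAt ℝ f (x t)) (hx : HasDerivAt x v t) :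
    HasDerivAt (fun s => f (x s)) ⟪gradient f (x t), v⟫ t :=
  (hasGradientAt_iff_hasFDerivAt.mp hf.hasGradientAt).comp_hasDerivAt t hx

theorem sum_mul_sub_eq_zero_of_sum_mul_inner_gradient_eq_zero {E ι : Type*}
    [NormedAddCommGroup E] [InnerProductSpace ℝ E] [CompleteSpace E] [Fintype ι]
    {X : Set E} {φ : ι → E → ℝ} (hφ : ∀ l, ∀ y ∈ X, DifferentiableAt ℝ (φ l) y) {F : E → E}
    {θ : ι → ℝ} (hθ : ∀ y ∈ X, ∑ l, θ l * ⟪gradient (φ l) y, F y⟫ = 0)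
    {I : Set ℝ} (hI : I.OrdConnected) {x : ℝ → E} (hxX : ∀ t ∈ I, x t ∈ X)
    (hx : ∀ t ∈ I, HasDerivAt x (F (x t)) t) {t₁ t₂ : ℝ} (ht₁ : t₁ ∈ I) (ht₂ : t₂ ∈ I) :
    ∑ l, θ l * (φ l (x t₂) - φ l (x t₁)) = 0 := by
  have hderiv : ∀ t ∈ I, HasDerivAt (fun s => ∑ l, θ l * φ l (x s)) 0 t := by
    intro t ht
    rw [← hθ (x t) (hxX t ht)]
    exact HasDerivAt.fun_sum fun l _ =>
      ((hφ l (x t) (hxX t ht)).hasDerivAt_comp_inner_gradient (hx t ht)).const_mul (θ l)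
  have hconst := hI.eq_of_hasDerivAt_eq_zero hderiv ht₂ ht₁
  simp only [mul_sub, Finset.sum_sub_distrib, hconst, sub_self]

/-- **Linear independence claim in the proof of Theorem 2.**  If for every nonzero `θ`
there is a trajectory of `F` in `X` along which `∑ l, θ l * (φ l (x t₂) - φ l (x t₁)) ≠ 0`,
then the functions `x ↦ ⟨∇φ l x, F x⟩` are linearly independent on `X`: any `θ` whose
corresponding combination vanishes identically on `X` must be zero. -/
theorem gradient_field_linear_independent {n L : ℕ}
    (X : Set (EuclideanSpace ℝ (Fin n)))
    (φ : Fin L → EuclideanSpace ℝ (Fin n) → ℝ)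
    (hφ : ∀ l, Differentiable ℝ (φ l))
    (F : EuclideanSpace ℝ (Fin n) → EuclideanSpace ℝ (Fin n))
    (hyp : ∀ θ : Fin L → ℝ, θ ≠ 0 →
      ∃ I : Set ℝ, I.OrdConnected ∧
        ∃ x : ℝ → EuclideanSpace ℝ (Fin n),
          (∀ t ∈ I, x t ∈ X) ∧
          (∀ t ∈ I, HasDerivAt x (F (x t)) t) ∧
          ∃ t₁ ∈ I, ∃ t₂ ∈ I,
            (∑ l, θ l * (φ l (x t₂) - φ l (x t₁))) ≠ 0) :
    ∀ θ : Fin L → ℝ,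
      (∀ x ∈ X, ∑ l, θ l * (inner ℝ (gradient (φ l) x) (F x) : ℝ) = 0) → θ = 0 := by
  intro θ hθ
  by_contra hne
  obtain ⟨I, hI, x, hxX, hx, t₁, ht₁, t₂, ht₂, hsum⟩ := hyp θ hne
  exact hsum <| sum_mul_sub_eq_zero_of_sum_mul_inner_gradient_eq_zero
    (fun l y _ => hφ l y) hθ hI hxX hx ht₁ ht₂
end
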